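/- Fix reals x, y > 0 and let Ξ denote evaluation at ν_b = x, ν_w = y. Let F ∈ ℝ_{≥0}[s, ν_b, ν_w][[t]] be a series whose monomials t^m s^g ν_b^a ν_w^b all satisfy m ≥ a + b. Define Ω := (1/3)(D_t + D_w − D_b − 1) ∘ Λ − (t ν_w D_t + t(1 − ν_b ν_w)∂_b)² with Λ := 2t²((ν_w² + ν_b) D_t + ν_w(1 − ν_b ν_w) ∂_b + (1 − ν_b ν_w) ∂_w). Then, coefficientwise in s and t: Ξ(Ω F) ≤ (4t²/3) (y² + x + y/x + 1/y) (D_t + 2)(D_t (Ξ F)). -/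

import Mathlib

/-!
Every operator in Ω shifts exponents by a fixed amount, so Ω(tⁿ ν_bᵃ ν_wᵇ) = t^(n+2) ν_bᵃ ν_wᵇ σ
with σ (`omSymbol`) a Laurent polynomial in ν_b, ν_w supported on ν_w², ν_b, ν_w/ν_b, 1/ν_w,
1/ν_b². Hence the t^(n+2) coefficient of Ξ(Ω F) is the sum, over the monomials of F at tⁿ, of
coefficient · xᵃ yᵇ · σ(x, y). For a + b ≤ n the coefficients of ν_w², ν_b and 1/ν_w are at most
(4/3)(n+2)n while those of ν_w/ν_b and 1/ν_b² are nonpositive, so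
σ(x, y) ≤ (4/3)(n+2)n (y² + x + y/x + 1/y), and the coefficients of F are nonnegative.
-/

namespace Stmt17

/-- Formal power series in t, s, ν_b, ν_w with real coefficients
(variable 0 = t, 1 = s, 2 = ν_b, 3 = ν_w). -/
abbrev R4 : Type := MvPowerSeries (Fin 4) ℝ

noncomputable def T : R4 := MvPowerSeries.X 0
noncomputable def B : R4 := MvPowerSeries.X 2
noncomputable def W : R4 := MvPowerSeries.X 3

/-- D_t = t ∂/∂t. -/
noncomputable def Dt (f : R4) : R4 := fun d => (d 0 : ℝ) * f d
/-- D_b = ν_b ∂/∂ν_b. -/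
noncomputable def Db (f : R4) : R4 := fun d => (d 2 : ℝ) * f d
/-- D_w = ν_w ∂/∂ν_w. -/
noncomputable def Dw (f : R4) : R4 := fun d => (d 3 : ℝ) * f d
/-- ∂/∂ν_b. -/
noncomputable def pb (f : R4) : R4 := fun d => ((d 2 : ℕ) + 1 : ℝ) * f (d + Finsupp.single 2 1)
/-- ∂/∂ν_w. -/
noncomputable def pw (f : R4) : R4 := fun d => ((d 3 : ℕ) + 1 : ℝ) * f (d + Finsupp.single 3 1)

/-- Λ := 2t²((ν_w² + ν_b) D_t + ν_w(1 − ν_b ν_w) ∂_b + (1 − ν_b ν_w) ∂_w). -/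
noncomputable def Lam (f : R4) : R4 :=
  2 * T ^ 2 * ((W ^ 2 + B) * Dt f + W * (1 - B * W) * pb f + (1 - B * W) * pw f)

/-- The first-order operator t ν_w D_t + t(1 − ν_b ν_w)∂_b. -/
noncomputable def Psi (f : R4) : R4 := T * W * Dt f + T * (1 - B * W) * pb f

/-- Ω := (1/3)(D_t + D_w − D_b − 1) ∘ Λ − (t ν_w D_t + t(1 − ν_b ν_w)∂_b)². -/
noncomputable def Om (f : R4) : R4 :=
  (1 / 3 : ℝ) • (Dt (Lam f) + Dw (Lam f) - Db (Lam f) - Lam f) - Psi (Psi f)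

/-- Membership in the semiring 𝔸: all coefficients are nonnegative and every monomial
t^m s^g ν_b^a ν_w^b appearing satisfies m ≥ a + b. -/
def A : Set R4 :=
  {f | ∀ d : Fin 4 →₀ ℕ, 0 ≤ MvPowerSeries.coeff (R := ℝ) d f ∧
    (MvPowerSeries.coeff (R := ℝ) d f ≠ 0 → d 2 + d 3 ≤ d 0)}

/-- The evaluation Ξ at ν_b = x, ν_w = y, producing a series in t and s given by its
coefficients; for F ∈ 𝔸 only exponents a + b ≤ m contribute, so the sum is finite. -/
noncomputable def Xi (x y : ℝ) (F : R4) : ℕ → ℕ → ℝ := fun m g =>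
  ∑ a ∈ Finset.range (m + 1), ∑ b ∈ Finset.range (m + 1),
    MvPowerSeries.coeff (R := ℝ)
      (Finsupp.single (0 : Fin 4) m + Finsupp.single 1 g
        + Finsupp.single 2 a + Finsupp.single 3 b) F * x ^ a * y ^ b

/-- (D_t + 2)(D_t h), coefficientwise on series in t and s. -/
def DtPlus2Dt (h : ℕ → ℕ → ℝ) : ℕ → ℕ → ℝ := fun m g => ((m : ℝ) + 2) * ((m : ℝ) * h m g)

/-- Multiplication by t^j acting on series in t and s. -/
def tmul (j : ℕ) (h : ℕ → ℕ → ℝ) : ℕ → ℕ → ℝ := fun m g =>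
  if j ≤ m then h (m - j) g else 0

open Finset MvPowerSeries

noncomputable def expo (m g a b : ℕ) : Fin 4 →₀ ℕ :=
  Finsupp.single 0 m + Finsupp.single 1 g + Finsupp.single 2 a + Finsupp.single 3 b

section Expo

variable (m g a b : ℕ)

@[simp] lemma expo_apply_zero : expo m g a b 0 = m := by simp [expo]
@[simp] lemma expo_apply_two : expo m g a b 2 = a := by simp [expo]
@[simp] lemma expo_apply_three : expo m g a b 3 = b := by simp [expo]

@[simp] lemma expo_add_single_two : expo m g a b + Finsupp.single 2 1 = expo m g (a + 1) b := by
  ext i; fin_cases i <;> simp [expo]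

@[simp] lemma expo_add_single_three :
    expo m g a b + Finsupp.single 3 1 = expo m g a (b + 1) := by
  ext i; fin_cases i <;> simp [expo]

lemma coeff_monomial_mul_expo (p q r : ℕ) (c : ℝ) (f : R4) :
    coeff (expo m g a b) (monomial (expo p 0 q r) c * f) =
      if p ≤ m ∧ q ≤ a ∧ r ≤ b then c * coeff (expo (m - p) g (a - q) (b - r)) f else 0 := by
  have hle : expo p 0 q r ≤ expo m g a b ↔ p ≤ m ∧ q ≤ a ∧ r ≤ b := by
    simp [Finsupp.le_def, Fin.forall_fin_succ, expo, Finsupp.single_apply]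
  have hsub : expo m g a b - expo p 0 q r = expo (m - p) g (a - q) (b - r) := by
    ext i; fin_cases i <;> simp [expo]
  simp only [coeff_monomial_mul, hle, hsub]

end Expo

section Coeff

variable (f : R4) (d : Fin 4 →₀ ℕ)

@[simp] lemma coeff_Dt : coeff d (Dt f) = d 0 * coeff d f := rfl
@[simp] lemma coeff_Db : coeff d (Db f) = d 2 * coeff d f := rfl
@[simp] lemma coeff_Dw : coeff d (Dw f) = d 3 * coeff d f := rfl
@[simp] lemma coeff_pb : coeff d (pb f) = (d 2 + 1) * coeff (d + Finsupp.single 2 1) f := rfl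
@[simp] lemma coeff_pw : coeff d (pw f) = (d 3 + 1) * coeff (d + Finsupp.single 3 1) f := rfl

end Coeff

lemma monomial_expo_eq (p q r : ℕ) (c : ℝ) :
    (monomial (expo p 0 q r) c : R4) = C c * (T ^ p * B ^ q * W ^ r) := by
  rw [T, B, W, X_pow_eq, X_pow_eq, X_pow_eq, ← monomial_zero_eq_C_apply]
  simp only [monomial_mul_monomial, expo]
  simp

lemma Psi_eq_monomials (f : R4) : Psi f =
    monomial (expo 1 0 0 1) 1 * Dt f + monomial (expo 1 0 0 0) 1 * pb f
      - monomial (expo 1 0 1 1) 1 * pb f := by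
  simp only [monomial_expo_eq, map_one, Psi]; ring

lemma Lam_eq_monomials (f : R4) : Lam f =
    monomial (expo 2 0 0 2) 2 * Dt f + monomial (expo 2 0 1 0) 2 * Dt f
      + monomial (expo 2 0 0 1) 2 * pb f - monomial (expo 2 0 1 2) 2 * pb f
      + monomial (expo 2 0 0 0) 2 * pw f - monomial (expo 2 0 1 1) 2 * pw f := by
  simp only [monomial_expo_eq, map_ofNat, Lam]; ring

lemma coeff_Psi_zero (f : R4) (g a b : ℕ) : coeff (expo 0 g a b) (Psi f) = 0 := by
  simp [Psi_eq_monomials, coeff_monomial_mul_expo]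

lemma coeff_Psi_succ (f : R4) (m g a b : ℕ) :
    coeff (expo (m + 1) g a b) (Psi f) = (a + 1) * coeff (expo m g (a + 1) b) f
      + if 1 ≤ b then ((m : ℝ) - a) * coeff (expo m g a (b - 1)) f else 0 := by
  rw [Psi_eq_monomials]
  simp only [map_sub, map_add, coeff_monomial_mul_expo, coeff_Dt, coeff_pb, expo_apply_zero,
    expo_apply_two, expo_add_single_two]
  rcases a with _ | a <;> rcases b with _ | b <;> simp <;> ring

lemma coeff_Lam_of_lt_two (f : R4) (m g a b : ℕ) (hm : m < 2) :
    coeff (expo m g a b) (Lam f) = 0 := by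
  simp [Lam_eq_monomials, coeff_monomial_mul_expo, show ¬ 2 ≤ m by omega]

lemma coeff_Lam_add_two (f : R4) (m g a b : ℕ) :
    coeff (expo (m + 2) g a b) (Lam f) =
      2 * ((if 2 ≤ b then ((m : ℝ) - a) * coeff (expo m g a (b - 2)) f else 0)
      + (if 1 ≤ a then ((m : ℝ) - b) * coeff (expo m g (a - 1) b) f else 0)
      + (if 1 ≤ b then ((a : ℝ) + 1) * coeff (expo m g (a + 1) (b - 1)) f else 0)
      + ((b : ℝ) + 1) * coeff (expo m g a (b + 1)) f) := by
  rw [Lam_eq_monomials]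
  simp only [map_sub, map_add, coeff_monomial_mul_expo, coeff_Dt, coeff_pb, coeff_pw,
    expo_apply_zero, expo_apply_two, expo_apply_three, expo_add_single_two, expo_add_single_three]
  rcases a with _ | a <;> rcases b with _ | _ | b <;> simp <;> ring

/- Ω(tⁿ ν_bᵃ ν_wᵇ) = t^(n+2) ν_bᵃ ν_wᵇ (coeffW2 ν_w² + coeffB ν_b + coeffWDivB ν_w/ν_b
  + coeffInvW / ν_w − coeffInvB2 / ν_b²), the coefficients taken at (n, a, b). -/
noncomputable def coeffW2 (n a b : ℕ) : ℝ := (n - a) * (a + 2 * b + 3 - n) / 3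
noncomputable def coeffB (n a b : ℕ) : ℝ := 2 * (n + b - a) * (n - b) / 3
noncomputable def coeffWDivB (n a b : ℕ) : ℝ := 2 * a * (b + 2 * a - 2 * n) / 3
noncomputable def coeffInvW (n a b : ℕ) : ℝ := 2 * b * (n + b - a) / 3
noncomputable def coeffInvB2 (a : ℕ) : ℝ := a * (a - 1)

lemma coeff_Om_add_two (f : R4) (n g a b : ℕ) :
    coeff (expo (n + 2) g a b) (Om f) =
      (if 2 ≤ b then coeffW2 n a (b - 2) * coeff (expo n g a (b - 2)) f else 0)
      + (if 1 ≤ a then coeffB n (a - 1) b * coeff (expo n g (a - 1) b) f else 0)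
      + (if 1 ≤ b then coeffWDivB n (a + 1) (b - 1) * coeff (expo n g (a + 1) (b - 1)) f else 0)
      + coeffInvW n a (b + 1) * coeff (expo n g a (b + 1)) f
      - coeffInvB2 (a + 2) * coeff (expo n g (a + 2) b) f := by
  simp only [Om, map_sub, map_add, coeff_smul, coeff_Dt, coeff_Dw, coeff_Db, expo_apply_zero,
    expo_apply_two, expo_apply_three, coeff_Lam_add_two, coeff_Psi_succ]
  rcases a with _ | a <;> rcases b with _ | _ | b <;>
    simp [coeffW2, coeffB, coeffWDivB, coeffInvW, coeffInvB2] <;> ring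

lemma coeff_Om_of_lt_two (f : R4) (m g a b : ℕ) (hm : m < 2) :
    coeff (expo m g a b) (Om f) = 0 := by
  interval_cases m
  · simp [Om, coeff_Lam_of_lt_two, coeff_Psi_zero]
  · simp [Om, coeff_Lam_of_lt_two, coeff_Psi_succ, coeff_Psi_zero]

lemma sum_range_add_ite_sub {M : Type*} [AddCommMonoid M] (h : ℕ → M) (δ n : ℕ) :
    ∑ k ∈ range (δ + n), (if δ ≤ k then h (k - δ) else 0) = ∑ k ∈ range n, h k := by
  rw [sum_range_add, sum_eq_zero fun k hk => if_neg (by simpa using hk)]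
  simp

lemma sum_range_add_of_eq_zero {M : Type*} [AddCommMonoid M] (h : ℕ → M) (δ n : ℕ)
    (hh : ∀ k < δ, h k = 0) : ∑ k ∈ range (δ + n), h k = ∑ k ∈ range n, h (δ + k) := by
  rw [sum_range_add, sum_eq_zero fun k hk => hh k (by simpa using hk), zero_add]

def evalBox (N : ℕ) (G : ℕ → ℕ → ℝ) (x y : ℝ) : ℝ :=
  ∑ a ∈ range N, ∑ b ∈ range N, G a b * x ^ a * y ^ b

section EvalBox

variable {n N : ℕ} {G H : ℕ → ℕ → ℝ} {x y : ℝ}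

lemma evalBox_add :
    evalBox N (fun a b => G a b + H a b) x y = evalBox N G x y + evalBox N H x y := by
  simp only [evalBox, add_mul, sum_add_distrib]

lemma evalBox_sub :
    evalBox N (fun a b => G a b - H a b) x y = evalBox N G x y - evalBox N H x y := by
  simp only [evalBox, sub_mul, sum_sub_distrib]

lemma evalBox_swap : evalBox N G x y = evalBox N (fun a b => G b a) y x := by
  rw [evalBox, sum_comm]
  exact sum_congr rfl fun b _ => sum_congr rfl fun a _ => by ring

lemma evalBox_of_support (hG : ∀ a b, n < a + b → G a b = 0) (hN : n + 1 ≤ N) :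
    evalBox N G x y = evalBox (n + 1) G x y := by
  have hzero : ∀ a b, n + 1 ≤ a ∨ n + 1 ≤ b → G a b * x ^ a * y ^ b = 0 := fun a b h => by
    rw [hG a b (by omega), zero_mul, zero_mul]
  rw [evalBox, eventually_constant_sum (fun a ha => sum_eq_zero fun b _ => hzero a b (.inl ha)) hN]
  exact sum_congr rfl fun a _ => eventually_constant_sum (fun b hb => hzero a b (.inr hb)) hN

lemma evalBox_shift_snd (j : ℕ) (hG : ∀ a b, n < a + b → G a b = 0) (hN : n + 1 + j ≤ N) :
    evalBox N (fun a b => if j ≤ b then G a (b - j) else 0) x y = y ^ j * evalBox N G x y := by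
  obtain ⟨M, rfl⟩ : ∃ M, N = j + M := ⟨N - j, by omega⟩
  rw [evalBox, evalBox, mul_sum]
  refine sum_congr rfl fun a _ => ?_
  calc ∑ b ∈ range (j + M), (if j ≤ b then G a (b - j) else 0) * x ^ a * y ^ b
      = ∑ b ∈ range (j + M), if j ≤ b then y ^ j * (G a (b - j) * x ^ a * y ^ (b - j)) else 0 :=
        sum_congr rfl fun b _ => by
          split_ifs with hb
          · rw [← pow_sub_mul_pow y hb]; ring
          · simp
    _ = ∑ b ∈ range M, y ^ j * (G a b * x ^ a * y ^ b) :=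
        sum_range_add_ite_sub (fun b => y ^ j * (G a b * x ^ a * y ^ b)) j M
    _ = ∑ b ∈ range (j + M), y ^ j * (G a b * x ^ a * y ^ b) :=
        (eventually_constant_sum (fun b hb => by simp [hG a b (by omega)]) (by omega)).symm
    _ = y ^ j * ∑ b ∈ range (j + M), G a b * x ^ a * y ^ b := (mul_sum ..).symm

lemma evalBox_shift_fst (i : ℕ) (hG : ∀ a b, n < a + b → G a b = 0) (hN : n + 1 + i ≤ N) :
    evalBox N (fun a b => if i ≤ a then G (a - i) b else 0) x y = x ^ i * evalBox N G x y := by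
  rw [evalBox_swap, evalBox_shift_snd i (fun a b h => hG b a (by omega)) hN, ← evalBox_swap]

lemma evalBox_unshift_snd (j : ℕ) (hG : ∀ a b, n < a + b → G a b = 0)
    (hlow : ∀ a b, b < j → G a b = 0) (hN : n + 1 ≤ N) (hy : y ≠ 0) :
    evalBox N (fun a b => G a (b + j)) x y = evalBox N G x y / y ^ j := by
  rw [eq_div_iff (pow_ne_zero j hy), evalBox, evalBox, sum_mul]
  refine sum_congr rfl fun a _ => ?_
  calc (∑ b ∈ range N, G a (b + j) * x ^ a * y ^ b) * y ^ j
      = ∑ b ∈ range N, G a (j + b) * x ^ a * y ^ (j + b) := by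
        rw [sum_mul]; exact sum_congr rfl fun b _ => by rw [add_comm j, pow_add]; ring
    _ = ∑ b ∈ range (j + N), G a b * x ^ a * y ^ b :=
        (sum_range_add_of_eq_zero (fun b => G a b * x ^ a * y ^ b) j N
          fun b hb => by simp [hlow a b hb]).symm
    _ = ∑ b ∈ range N, G a b * x ^ a * y ^ b :=
        eventually_constant_sum (fun b hb => by simp [hG a b (by omega)]) (by omega)

lemma evalBox_unshift_fst (i : ℕ) (hG : ∀ a b, n < a + b → G a b = 0)
    (hlow : ∀ a b, a < i → G a b = 0) (hN : n + 1 ≤ N) (hx : x ≠ 0) :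
    evalBox N (fun a b => G (a + i) b) x y = evalBox N G x y / x ^ i := by
  rw [evalBox_swap, evalBox_unshift_snd i (fun a b h => hG b a (by omega))
    (fun a b h => hlow b a h) hN hx, ← evalBox_swap]

lemma evalBox_mul_const (c : ℝ) :
    evalBox N (fun a b => G a b * c) x y = evalBox N G x y * c := by
  simp only [evalBox, sum_mul]
  exact sum_congr rfl fun a _ => sum_congr rfl fun b _ => by ring

lemma evalBox_mono (hx : 0 ≤ x) (hy : 0 ≤ y) (h : ∀ a b, G a b ≤ H a b) :
    evalBox N G x y ≤ evalBox N H x y :=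
  sum_le_sum fun a _ => sum_le_sum fun b _ => by gcongr; exact h a b

end EvalBox

lemma Xi_eq_evalBox (x y : ℝ) (F : R4) (m g : ℕ) :
    Xi x y F m g = evalBox (m + 1) (fun a b => coeff (expo m g a b) F) x y := rfl

noncomputable def omSymbol (n a b : ℕ) (x y : ℝ) : ℝ :=
  coeffW2 n a b * y ^ 2 + coeffB n a b * x + coeffWDivB n a b * (y / x) + coeffInvW n a b / y
    - coeffInvB2 a / x ^ 2

lemma Xi_Om_add_two {x y : ℝ} (hx : x ≠ 0) (hy : y ≠ 0) (f : R4) (n g : ℕ)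
    (hf : ∀ a b, n < a + b → coeff (expo n g a b) f = 0) :
    Xi x y (Om f) (n + 2) g =
      evalBox (n + 1) (fun a b => coeff (expo n g a b) f * omSymbol n a b x y) x y := by
  have supp : ∀ c : ℕ → ℕ → ℝ, ∀ a b, n < a + b → c a b * coeff (expo n g a b) f = 0 :=
    fun c a b h => by rw [hf a b h, mul_zero]
  rw [Xi_eq_evalBox]
  simp only [coeff_Om_add_two]
  set N := n + 2 + 1
  -- The down-shifted terms drop the rows a = 0, b = 0, a < 2, where their coefficients vanish.
  rw [evalBox_sub, evalBox_add, evalBox_add, evalBox_add,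
    evalBox_shift_snd (N := N) 2 (supp _) (by omega),
    evalBox_shift_fst (N := N) 1 (supp _) (by omega),
    evalBox_shift_snd (n := n) (N := N) 1
      (G := fun a b => coeffWDivB n (a + 1) b * coeff (expo n g (a + 1) b) f)
      (fun a b h => supp _ (a + 1) b (by omega)) (by omega),
    evalBox_unshift_fst (N := N) 1 (supp _) (fun a b h => by simp [show a = 0 by omega, coeffWDivB])
      (by omega) hx,
    evalBox_unshift_snd (N := N) 1 (supp _) (fun a b h => by simp [show b = 0 by omega, coeffInvW])
      (by omega) hy,
    evalBox_unshift_fst (N := N) 2 (G := fun a b => coeffInvB2 a * coeff (expo n g a b) f)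
      (supp _) (fun a b h => by interval_cases a <;> simp [coeffInvB2]) (by omega) hx]
  simp only [evalBox_of_support (supp _) (show n + 1 ≤ N by omega)]
  simp only [evalBox, mul_sum, sum_div, ← sum_add_distrib, ← sum_sub_distrib]
  refine sum_congr rfl fun a _ => sum_congr rfl fun b _ => ?_
  simp only [omSymbol]
  ring

section Bounds

variable {n a b : ℕ}

lemma coeffW2_le (h : a + b ≤ n) : coeffW2 n a b ≤ 4 / 3 * ((n : ℝ) + 2) * n := by
  have h' : (a : ℝ) + b ≤ n := by exact_mod_cast h
  have ha : (0 : ℝ) ≤ a := a.cast_nonneg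
  have hb : (0 : ℝ) ≤ b := b.cast_nonneg
  unfold coeffW2
  nlinarith [mul_nonneg (sub_nonneg.2 h') (by linarith : (0 : ℝ) ≤ n - a)]

lemma coeffB_le (h : a + b ≤ n) : coeffB n a b ≤ 4 / 3 * ((n : ℝ) + 2) * n := by
  have h' : (a : ℝ) + b ≤ n := by exact_mod_cast h
  have ha : (0 : ℝ) ≤ a := a.cast_nonneg
  have hb : (0 : ℝ) ≤ b := b.cast_nonneg
  unfold coeffB
  nlinarith [mul_nonneg ha (by linarith : (0 : ℝ) ≤ n - b)]

lemma coeffWDivB_nonpos (h : a + b ≤ n) : coeffWDivB n a b ≤ 0 := by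
  have h' : (a : ℝ) + b ≤ n := by exact_mod_cast h
  have ha : (0 : ℝ) ≤ a := a.cast_nonneg
  unfold coeffWDivB
  nlinarith

lemma coeffInvW_le (h : a + b ≤ n) : coeffInvW n a b ≤ 4 / 3 * ((n : ℝ) + 2) * n := by
  have h' : (a : ℝ) + b ≤ n := by exact_mod_cast h
  have ha : (0 : ℝ) ≤ a := a.cast_nonneg
  have hb : (0 : ℝ) ≤ b := b.cast_nonneg
  unfold coeffInvW
  nlinarith [mul_nonneg hb ha]

lemma coeffInvB2_nonneg (a : ℕ) : 0 ≤ coeffInvB2 a := by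
  rcases a with _ | a <;> simp [coeffInvB2]; positivity

lemma omSymbol_le {x y : ℝ} (hx : 0 < x) (hy : 0 < y) (h : a + b ≤ n) :
    omSymbol n a b x y ≤ 4 / 3 * ((n : ℝ) + 2) * n * (y ^ 2 + x + y / x + 1 / y) := by
  have hK : 0 ≤ 4 / 3 * ((n : ℝ) + 2) * n := by positivity
  have hW2 : coeffW2 n a b * y ^ 2 ≤ 4 / 3 * ((n : ℝ) + 2) * n * y ^ 2 := by
    gcongr; exact coeffW2_le h
  have hB : coeffB n a b * x ≤ 4 / 3 * ((n : ℝ) + 2) * n * x := by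
    gcongr; exact coeffB_le h
  have hWDivB : coeffWDivB n a b * (y / x) ≤ 4 / 3 * ((n : ℝ) + 2) * n * (y / x) := by
    gcongr; exact (coeffWDivB_nonpos h).trans hK
  have hInvW : coeffInvW n a b / y ≤ 4 / 3 * ((n : ℝ) + 2) * n * (1 / y) := by
    rw [mul_one_div]; gcongr; exact coeffInvW_le h
  have hInvB2 : 0 ≤ coeffInvB2 a / x ^ 2 := div_nonneg (coeffInvB2_nonneg a) (by positivity)
  unfold omSymbol
  linarith

end Bounds

lemma coeff_expo_eq_zero_of_mem_A {F : R4} (hF : F ∈ A) {n g a b : ℕ} (h : n < a + b) :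
    coeff (expo n g a b) F = 0 := by
  by_contra hne
  have := (hF (expo n g a b)).2 hne
  simp only [expo_apply_zero, expo_apply_two, expo_apply_three] at this
  omega

/-- for x, y > 0 and F ∈ 𝔸, coefficientwise in s and t,
Ξ(Ω F) ≤ (4t²/3)(y² + x + y/x + 1/y)(D_t + 2)(D_t(Ξ F)). -/
theorem stmt_17 (x y : ℝ) (hx : 0 < x) (hy : 0 < y) (F : R4) (hF : F ∈ A) (m g : ℕ) :
    Xi x y (Om F) m g
      ≤ 4 / 3 * (y ^ 2 + x + y / x + 1 / y) * tmul 2 (DtPlus2Dt (Xi x y F)) m g := by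
  rcases lt_or_ge m 2 with hm | hm
  · simp [Xi_eq_evalBox, evalBox, coeff_Om_of_lt_two _ _ _ _ _ hm, tmul, show ¬ 2 ≤ m by omega]
  obtain ⟨n, rfl⟩ : ∃ n, m = n + 2 := ⟨m - 2, by omega⟩
  have hsupp : ∀ a b, n < a + b → coeff (expo n g a b) F = 0 :=
    fun a b => coeff_expo_eq_zero_of_mem_A hF
  rw [Xi_Om_add_two hx.ne' hy.ne' F n g hsupp, tmul, if_pos hm, Nat.add_sub_cancel, DtPlus2Dt,
    Xi_eq_evalBox]
  calc _ ≤ evalBox (n + 1) (fun a b => coeff (expo n g a b) F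
          * (4 / 3 * ((n : ℝ) + 2) * n * (y ^ 2 + x + y / x + 1 / y))) x y := by
        refine evalBox_mono hx.le hy.le fun a b => ?_
        by_cases hab : n < a + b
        · simp [hsupp a b hab]
        · exact mul_le_mul_of_nonneg_left (omSymbol_le hx hy (by omega)) (hF _).1
    _ = _ := by rw [evalBox_mul_const]; ring

end Stmt17
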